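/- arXiv:1907.11043 — 2 statements merged into one kernel-verified Lean document; each statement's English description precedes it below -/
import Mathlib

section
/- Let $Q_0$ be a probability density supported in $[-|G|,|G|]\times\mathbb{V}$ solving $\partial_y((v\cdot G - y)Q_0) = \Lambda_0(y)(\langle Q_0\rangle - Q_0)$ with no mass on the boundary lines. Then the pointwise identity $G\cdot \int_{\mathbb{V}} v\, Q_0(y,v)\,dv = y \int_{\mathbb{V}} Q_0(y,v)\,dv$ holds for all $y \in \mathbb{R}$. Consequently the function $y \mapsto \int_{\mathbb{V}} v\,Q_0(y,v)\,dv$ is not identically zero. -/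
/-!
Integrated over `V`, the relaxation term `Λ0 (⨍ Q0 - Q0)` has zero mean, so by the fundamental
theorem of calculus and Fubini the flux `y ↦ ∫_V (v ⋅ G - y) Q0(y, v) dv` is constant; it vanishes
outside the support of `Q0`, hence everywhere, and expanding it gives the identity. If the
velocity moment vanished identically, `y ∫_V Q0(y, ·)` would vanish for every `y`, so the
density `∫_V Q0(y, ·)` would vanish for a.e. `y`, contradicting unit total mass.
-/

open MeasureTheory Set Filter
open scoped Interval

section

variable {α : Type*} [MeasurableSpace α] {μ : Measure α}

theorem integrable_and_integral_eq_zero_of_hasDerivAt [SFinite μ] {F S : ℝ → α → ℝ} {a b : ℝ}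
    (hF : ∀ᵐ v ∂μ, ∀ t, HasDerivAt (fun s => F s v) (S t v) t)
    (hFa : ∀ v, F a v = 0)
    (hS : Integrable (Function.uncurry S) ((volume.restrict (Ι a b)).prod μ))
    (hS0 : ∀ᵐ t, ∫ v, S t v ∂μ = 0) :
    Integrable (F b) μ ∧ ∫ v, F b v ∂μ = 0 := by
  have hF_eq : F b =ᵐ[μ] fun v => ∫ t in a..b, S t v := by
    filter_upwards [hF, hS.swap.prod_right_ae] with v hv hSv
    rw [intervalIntegral.integral_eq_sub_of_hasDerivAt (fun t _ => hv t)
      (intervalIntegrable_iff.mpr hSv), hFa, sub_zero]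
  refine ⟨Integrable.congr ?_ hF_eq.symm, ?_⟩
  · simp_rw [intervalIntegral.intervalIntegral_eq_integral_uIoc]
    exact hS.swap.integral_prod_left.smul (_ : ℝ)
  · rw [integral_congr_ae hF_eq, ← intervalIntegral_integral_swap hS]
    exact intervalIntegral.integral_zero_ae (hS0.mono fun t ht _ => ht)

theorem Integrable.continuous_mul_prod_restrict_uIoc [SFinite μ] {g : ℝ → ℝ} {f : ℝ × α → ℝ}
    (hg : Continuous g) (hf : Integrable f (volume.prod μ)) (a b : ℝ) :
    Integrable (fun p => g p.1 * f p) ((volume.restrict (Ι a b)).prod μ) := by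
  obtain ⟨C, hC⟩ := (isCompact_uIcc (a := a) (b := b)).exists_bound_of_continuousOn hg.continuousOn
  rw [Measure.restrict_prod_eq_prod_univ]
  refine hf.restrict.bdd_mul (c := C) (hg.measurable.comp measurable_fst).aestronglyMeasurable ?_
  filter_upwards [ae_restrict_mem (measurableSet_uIoc.prod MeasurableSet.univ)] with p hp
  exact hC p.1 (uIoc_subset_uIcc hp.1)

variable [IsFiniteMeasure μ] {Λ : ℝ → ℝ} {Q : ℝ → α → ℝ}

theorem integrable_relaxation (hΛ : Continuous Λ)
    (hQ : Integrable (Function.uncurry Q) (volume.prod μ)) (a b : ℝ) :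
    Integrable (fun p : ℝ × α => Λ p.1 * (⨍ w, Q p.1 w ∂μ - Q p.1 p.2))
      ((volume.restrict (Ι a b)).prod μ) := by
  refine Integrable.continuous_mul_prod_restrict_uIoc hΛ (Integrable.sub ?_ hQ) a b
  simp_rw [average_eq, smul_eq_mul]
  exact (hQ.integral_prod_left.const_mul _).comp_fst μ

theorem ae_integral_relaxation_eq_zero
    (hQ : Integrable (Function.uncurry Q) (volume.prod μ)) :
    ∀ᵐ t, ∫ v, Λ t * (⨍ w, Q t w ∂μ - Q t v) ∂μ = 0 := by
  filter_upwards [hQ.prod_right_ae] with t ht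
  rw [integral_const_mul, integral_average_sub (f := Q t) ht, mul_zero]

end

theorem inner_integral_smul_eq_mul_integral {E : Type*} [NormedAddCommGroup E]
    [InnerProductSpace ℝ E] [FiniteDimensional ℝ E] [MeasurableSpace E] [BorelSpace E]
    {μ : Measure E} {f : E → ℝ} {G : E} {y R : ℝ} (hR : ∀ᵐ v ∂μ, ‖v‖ ≤ R)
    (hflux_int : Integrable (fun v => (inner ℝ v G - y) * f v) μ)
    (hflux : ∫ v, (inner ℝ v G - y) * f v ∂μ = 0) :
    inner ℝ G (∫ v, f v • v ∂μ) = y * ∫ v, f v ∂μ := by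
  have hinner : ∀ v, inner ℝ G (f v • v) = inner ℝ v G * f v := fun v => by
    rw [real_inner_smul_right, real_inner_comm, mul_comm]
  by_cases hfv : Integrable (fun v => f v • v) μ
  · have hGf : Integrable (fun v => inner ℝ v G * f v) μ :=
      (hfv.const_inner G).congr (Eventually.of_forall hinner)
    calc inner ℝ G (∫ v, f v • v ∂μ)
        = ∫ v, inner ℝ v G * f v ∂μ := by simp_rw [← integral_inner hfv, hinner]
      _ = ∫ v, (inner ℝ v G * f v - (inner ℝ v G - y) * f v) ∂μ := by
          rw [integral_sub hGf hflux_int, hflux, sub_zero]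
      _ = y * ∫ v, f v ∂μ := by rw [← integral_const_mul]; congr with v; ring
  · -- `v` is bounded, so `f` is not integrable either and both sides are the junk value `0`.
    have hf : ¬ Integrable f μ := fun hf =>
      hfv (hf.smul_bdd R aestronglyMeasurable_id hR)
    rw [integral_undef hfv, integral_undef hf, inner_zero_right, mul_zero]

theorem integral_eq_zero_of_forall_mul_eq_zero {ρ : ℝ → ℝ} (h : ∀ y, y * ρ y = 0) :
    ∫ y, ρ y = 0 := by
  refine integral_eq_zero_of_ae ?_
  filter_upwards [compl_mem_ae_iff.2 (measure_singleton (0 : ℝ))] with y hy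
  exact (mul_eq_zero.1 (h y)).resolve_left hy

theorem flux_identity_general {d : ℕ} (G : EuclideanSpace ℝ (Fin d))
    (V : Set (EuclideanSpace ℝ (Fin d))) (hV : V = Metric.closedBall 0 1)
    (Λ0 : ℝ → ℝ)
    (hΛcont : Continuous Λ0)
    (Q0 : ℝ → EuclideanSpace ℝ (Fin d) → ℝ)
    (hint : Integrable (fun p : ℝ × EuclideanSpace ℝ (Fin d) => Q0 p.1 p.2)
      (volume.prod (volume.restrict V)))
    (hprob : ∫ y, ∫ v in V, Q0 y v = 1)
    (hsupp : ∀ y, ∀ v, ‖G‖ < |y| → Q0 y v = 0)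
    (heq : ∀ y, ∀ v ∈ V,
      HasDerivAt (fun y' => ((inner ℝ v G : ℝ) - y') * Q0 y' v)
        (Λ0 y * (((volume V).toReal)⁻¹ * (∫ w in V, Q0 y w) - Q0 y v)) y) :
    (∀ y, (inner ℝ G (∫ v in V, Q0 y v • v) : ℝ) = y * ∫ v in V, Q0 y v)
    ∧ (fun y => ∫ v in V, Q0 y v • v) ≠ 0 := by
  have : IsFiniteMeasure (volume.restrict V) :=
    isFiniteMeasure_restrict.2 (hV ▸ measure_closedBall_lt_top.ne)
  have hV_meas : MeasurableSet V := hV ▸ measurableSet_closedBall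
  have hV_norm : ∀ᵐ v ∂(volume.restrict V), ‖v‖ ≤ 1 := by
    filter_upwards [ae_restrict_mem hV_meas] with v hv
    exact mem_closedBall_zero_iff.1 (hV ▸ hv)
  have hderiv : ∀ᵐ v ∂(volume.restrict V), ∀ t,
      HasDerivAt (fun s => (inner ℝ v G - s) * Q0 s v)
        (Λ0 t * ((⨍ w in V, Q0 t w) - Q0 t v)) t := by
    filter_upwards [ae_restrict_mem hV_meas] with v hv t
    simpa only [setAverage_eq, smul_eq_mul, measureReal_def] using heq t v hv
  have hQ_far : ∀ v, (inner ℝ v G - (‖G‖ + 1)) * Q0 (‖G‖ + 1) v = 0 := fun v => by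
    rw [hsupp _ v (by rw [abs_of_pos (by positivity)]; linarith), mul_zero]
  have hflux (y : ℝ) := integrable_and_integral_eq_zero_of_hasDerivAt (b := y) hderiv hQ_far
    (integrable_relaxation hΛcont hint _ _) (ae_integral_relaxation_eq_zero hint)
  have hidentity (y : ℝ) := inner_integral_smul_eq_mul_integral hV_norm (hflux y).1 (hflux y).2
  refine ⟨hidentity, fun hzero => ?_⟩
  have hmass : ∫ y, ∫ v in V, Q0 y v = 0 := integral_eq_zero_of_forall_mul_eq_zero fun y => by
    rw [← hidentity y, congrFun hzero y, Pi.zero_apply, inner_zero_right]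
  exact one_ne_zero (hprob.symm.trans hmass)

/-- the flux identity `G ⋅ ∫ v Q0 dv = y ∫ Q0 dv` and the nonvanishing of
the velocity moment `y ↦ ∫ v Q0 dv`. -/
theorem flux_identity {d : ℕ} (G : EuclideanSpace ℝ (Fin d)) (hG : G ≠ 0)
    (V : Set (EuclideanSpace ℝ (Fin d))) (hV : V = Metric.closedBall 0 1)
    (Λ0 : ℝ → ℝ) (lam1 lam2 : ℝ) (hlam1 : 0 < lam1)
    (hΛcont : Continuous Λ0) (hΛbd : ∀ y, lam1 ≤ Λ0 y ∧ Λ0 y ≤ lam2)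
    (Q0 : ℝ → EuclideanSpace ℝ (Fin d) → ℝ)
    (hpos : ∀ y v, 0 ≤ Q0 y v)
    (hint : Integrable (fun p : ℝ × EuclideanSpace ℝ (Fin d) => Q0 p.1 p.2)
      (volume.prod (volume.restrict V)))
    (hprob : ∫ y, ∫ v in V, Q0 y v = 1)
    (hsupp : ∀ y, ∀ v, ‖G‖ < |y| → Q0 y v = 0)
    (heq : ∀ y, ∀ v ∈ V,
      HasDerivAt (fun y' => ((inner ℝ v G : ℝ) - y') * Q0 y' v)
        (Λ0 y * (((volume V).toReal)⁻¹ * (∫ w in V, Q0 y w) - Q0 y v)) y) :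
    (∀ y, (inner ℝ G (∫ v in V, Q0 y v • v) : ℝ) = y * ∫ v in V, Q0 y v)
    ∧ (fun y => ∫ v in V, Q0 y v • v) ≠ 0 :=
  flux_identity_general G V hV Λ0 hΛcont Q0 hint hprob hsupp heq
end

section
/- Let $0 < \lambda_1 \leq \Lambda_0(y) \leq \lambda_2$ and let $Q_0$ be a nonnegative solution of $\partial_y((v\cdot G - y)Q_0) = \Lambda_0(y)(\langle Q_0\rangle - Q_0)$ on the region $\{y < v\cdot G\}$ vanishing at $y = -|G|$. Then for $y < v\cdot G$ the two-sided Duhamel bounds hold: $(v\cdot G - y)^{1-\lambda_2} Q_0(y,v) \geq \lambda_1 \int_{-|G|}^{y} (v\cdot G - z)^{-\lambda_2}\langle Q_0\rangle(z)\,dz$ and $(v\cdot G - y)^{1-\lambda_1} Q_0(y,v) \leq \lambda_2 \int_{-|G|}^{y} (v\cdot G - z)^{-\lambda_1}\langle Q_0\rangle(z)\,dz$. -/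
open MeasureTheory Set

noncomputable section

/-! Write `c = v ⬝ G` and `F = (c - y) Q₀`, so the equation reads `F' = Λ₀ (⟨Q₀⟩ - Q₀)`. Multiplying by
the integrating factor `(c - y)^(-λ)` gives
`((c - y)^(1-λ) Q₀)' = (c - y)^(-λ) (Λ₀ ⟨Q₀⟩ + (λ - Λ₀) Q₀)`,
whose last term is nonnegative for `λ = λ₂` and nonpositive for `λ = λ₁`; integrating from `-‖G‖`,
where `Q₀` vanishes, gives the two bounds. The integrals make sense because `Λ₀ ⟨Q₀⟩ = F' + Λ₀ Q₀` is
nonnegative and is a derivative plus a continuous function, hence integrable. -/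

theorem HasDerivAt.rpow_sub_mul_of_hasDerivAt_sub_mul {q : ℝ → ℝ} {c x D : ℝ} (r : ℝ)
    (hx : x < c) (h : HasDerivAt (fun z => (c - z) * q z) D x) :
    HasDerivAt (fun z => (c - z) ^ (1 - r) * q z) ((c - x) ^ (-r) * (D + r * q x)) x := by
  have hpos : 0 < c - x := sub_pos.2 hx
  have hweight : HasDerivAt (fun z => (c - z) ^ (-r)) (r * (c - x) ^ (-r - 1)) x := by
    convert ((hasDerivAt_id' x).const_sub c).rpow_const (p := -r) (Or.inl hpos.ne') using 1
    ring_nf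
  have hfactor : ∀ z, z < c → (c - z) ^ (1 - r) * q z = (c - z) ^ (-r) * ((c - z) * q z) := by
    intro z hz
    rw [sub_eq_add_neg 1, Real.rpow_add (sub_pos.2 hz), Real.rpow_one]; ring
  refine (hweight.mul h).congr_of_eventuallyEq ?_ |>.congr_deriv ?_
  · filter_upwards [Iio_mem_nhds hx] with z hz using hfactor z hz
  · rw [show (c - x) ^ (-r) = (c - x) ^ (-r - 1) * (c - x) by
      rw [← Real.rpow_add_one hpos.ne']; ring_nf]
    ring

theorem integrableOn_of_hasDerivAt_sub_of_nonneg {g u k : ℝ → ℝ} {a b : ℝ}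
    (hg : ContinuousOn g (Icc a b)) (hderiv : ∀ x ∈ Ioo a b, HasDerivAt g (u x - k x) x)
    (hk : ContinuousOn k (Icc a b)) (hu : ∀ x ∈ Ioo a b, 0 ≤ u x) :
    IntegrableOn u (Ioc a b) := by
  obtain ⟨K, hK⟩ := isCompact_Icc.exists_bound_of_continuousOn hk
  -- `g + K x` has the nonnegative, hence integrable, derivative `u - k + K`.
  have hshift : IntegrableOn (fun x => u x - k x + K) (Ioc a b) := by
    refine intervalIntegral.integrableOn_deriv_of_nonneg (g := fun x => g x + K * x) (by fun_prop)
      (fun x hx => (hderiv x hx).add (by simpa using (hasDerivAt_id x).const_mul K)) ?_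
    intro x hx
    have hkK : k x ≤ K := (Real.le_norm_self _).trans (hK x (Ioo_subset_Icc_self hx))
    linarith [hu x hx]
  have hkint : IntegrableOn k (Ioc a b) := (hk.integrableOn_Icc).mono_set Ioc_subset_Icc_self
  refine ((hshift.add hkint).sub (integrableOn_const (C := K) measure_Ioc_lt_top.ne)).congr_fun ?_
    measurableSet_Ioc
  intro x _
  simp only [Pi.add_apply, Pi.sub_apply]
  ring

namespace Duhamel

variable {q p Λ : ℝ → ℝ} {a b c : ℝ}

theorem integrableOn_source (hbc : b < c) (hΛ : ContinuousOn Λ (Icc a b))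
    (hΛpos : ∀ x ∈ Icc a b, 0 < Λ x) (hp : ∀ x ∈ Ioo a b, 0 ≤ p x)
    (hderiv : ∀ x ∈ Icc a b, HasDerivAt (fun z => (c - z) * q z) (Λ x * (p x - q x)) x) :
    IntegrableOn p (Icc a b) := by
  have hsub : ∀ x ∈ Icc a b, c - x ≠ 0 := fun x hx => (sub_pos.2 (hx.2.trans_lt hbc)).ne'
  have hF : ContinuousOn (fun z => (c - z) * q z) (Icc a b) :=
    fun x hx => (hderiv x hx).continuousAt.continuousWithinAt
  have hq : ContinuousOn q (Icc a b) :=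
    (hF.div (continuousOn_const.sub continuousOn_id) hsub).congr fun x hx =>
      (mul_div_cancel_left₀ (q x) (hsub x hx)).symm
  have hΛp : IntegrableOn (fun x => Λ x * p x) (Icc a b) := by
    rw [integrableOn_Icc_iff_integrableOn_Ioc]
    refine integrableOn_of_hasDerivAt_sub_of_nonneg hF (k := fun x => Λ x * q x)
      (fun x hx => by simpa only [mul_sub] using hderiv x (Ioo_subset_Icc_self hx)) (hΛ.mul hq)
      fun x hx => mul_nonneg (hΛpos x (Ioo_subset_Icc_self hx)).le (hp x hx)
  exact (hΛp.continuousOn_mul (hΛ.inv₀ fun x hx => (hΛpos x hx).ne') isCompact_Icc).congr_fun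
    (fun x hx => inv_mul_cancel_left₀ (hΛpos x hx).ne' _) measurableSet_Icc

theorem integrableOn_rpow_sub_mul (hbc : b < c) (hp : IntegrableOn p (Icc a b)) (r : ℝ) :
    IntegrableOn (fun z => (c - z) ^ r * p z) (Icc a b) :=
  hp.continuousOn_mul ((continuousOn_const.sub continuousOn_id).rpow_const
    fun _ hx => Or.inl (sub_pos.2 (hx.2.trans_lt hbc)).ne') isCompact_Icc

theorem hasDerivAt_rpow_sub_mul (hbc : b < c)
    (hderiv : ∀ x ∈ Icc a b, HasDerivAt (fun z => (c - z) * q z) (Λ x * (p x - q x)) x)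
    (r : ℝ) {x : ℝ} (hx : x ∈ Icc a b) :
    HasDerivAt (fun z => (c - z) ^ (1 - r) * q z)
      ((c - x) ^ (-r) * (Λ x * p x + (r - Λ x) * q x)) x := by
  convert (hderiv x hx).rpow_sub_mul_of_hasDerivAt_sub_mul r (hx.2.trans_lt hbc) using 2
  ring

theorem lower_bound {r μ : ℝ} (hab : a ≤ b) (hbc : b < c)
    (hderiv : ∀ x ∈ Icc a b, HasDerivAt (fun z => (c - z) * q z) (Λ x * (p x - q x)) x)
    (hqa : q a = 0) (hint : IntegrableOn (fun z => (c - z) ^ (-r) * p z) (Icc a b))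
    (hΛ : ∀ x ∈ Ioo a b, μ ≤ Λ x ∧ Λ x ≤ r) (hp : ∀ x ∈ Ioo a b, 0 ≤ p x)
    (hq : ∀ x ∈ Ioo a b, 0 ≤ q x) :
    μ * ∫ z in Ioc a b, (c - z) ^ (-r) * p z ≤ (c - b) ^ (1 - r) * q b := by
  have h := intervalIntegral.integral_le_sub_of_hasDeriv_right_of_le hab
    (fun x hx => (hasDerivAt_rpow_sub_mul hbc hderiv r hx).continuousAt.continuousWithinAt)
    (fun x hx => (hasDerivAt_rpow_sub_mul hbc hderiv r (Ioo_subset_Icc_self hx)).hasDerivWithinAt)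
    (hint.const_mul μ) fun x hx => ?_
  · rwa [intervalIntegral.integral_of_le hab, integral_const_mul, hqa, mul_zero, sub_zero] at h
  · rw [mul_left_comm]
    refine mul_le_mul_of_nonneg_left ?_ (Real.rpow_nonneg (sub_pos.2 (hx.2.trans hbc)).le _)
    nlinarith [hΛ x hx, hp x hx, hq x hx]

theorem upper_bound {r μ : ℝ} (hab : a ≤ b) (hbc : b < c)
    (hderiv : ∀ x ∈ Icc a b, HasDerivAt (fun z => (c - z) * q z) (Λ x * (p x - q x)) x)
    (hqa : q a = 0) (hint : IntegrableOn (fun z => (c - z) ^ (-r) * p z) (Icc a b))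
    (hΛ : ∀ x ∈ Ioo a b, r ≤ Λ x ∧ Λ x ≤ μ) (hp : ∀ x ∈ Ioo a b, 0 ≤ p x)
    (hq : ∀ x ∈ Ioo a b, 0 ≤ q x) :
    (c - b) ^ (1 - r) * q b ≤ μ * ∫ z in Ioc a b, (c - z) ^ (-r) * p z := by
  have h := intervalIntegral.sub_le_integral_of_hasDeriv_right_of_le hab
    (fun x hx => (hasDerivAt_rpow_sub_mul hbc hderiv r hx).continuousAt.continuousWithinAt)
    (fun x hx => (hasDerivAt_rpow_sub_mul hbc hderiv r (Ioo_subset_Icc_self hx)).hasDerivWithinAt)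
    (hint.const_mul μ) fun x hx => ?_
  · rwa [intervalIntegral.integral_of_le hab, integral_const_mul, hqa, mul_zero, sub_zero] at h
  · rw [mul_left_comm μ]
    refine mul_le_mul_of_nonneg_left ?_ (Real.rpow_nonneg (sub_pos.2 (hx.2.trans hbc)).le _)
    nlinarith [hΛ x hx, hp x hx, hq x hx]

end Duhamel

/-- two-sided Duhamel bounds for `Q0` on the region `y < v⋅G`. -/
theorem duhamel_bounds {d : ℕ} (G : EuclideanSpace ℝ (Fin d))
    (V : Set (EuclideanSpace ℝ (Fin d)))
    (Λ0 : ℝ → ℝ) (lam1 lam2 : ℝ) (hlam1 : 0 < lam1)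
    (hΛcont : Continuous Λ0) (hΛbd : ∀ y, lam1 ≤ Λ0 y ∧ Λ0 y ≤ lam2)
    (Q0 : ℝ → EuclideanSpace ℝ (Fin d) → ℝ)
    (hpos : ∀ y v, 0 ≤ Q0 y v)
    (heq : ∀ y, ∀ v ∈ V,
      HasDerivAt (fun y' => ((inner ℝ v G : ℝ) - y') * Q0 y' v)
        (Λ0 y * (((volume V).toReal)⁻¹ * (∫ w in V, Q0 y w) - Q0 y v)) y)
    (hbdry : ∀ v, Q0 (-‖G‖) v = 0) :
    ∀ v ∈ V, ∀ y : ℝ, -‖G‖ ≤ y → y < (inner ℝ v G : ℝ) →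
      (lam1 * ∫ z in Ioc (-‖G‖) y,
          ((inner ℝ v G : ℝ) - z) ^ (-lam2) * (((volume V).toReal)⁻¹ * ∫ w in V, Q0 z w)
        ≤ ((inner ℝ v G : ℝ) - y) ^ (1 - lam2) * Q0 y v)
      ∧ ((inner ℝ v G : ℝ) - y) ^ (1 - lam1) * Q0 y v
        ≤ lam2 * ∫ z in Ioc (-‖G‖) y,
            ((inner ℝ v G : ℝ) - z) ^ (-lam1) * (((volume V).toReal)⁻¹ * ∫ w in V, Q0 z w) := by
  intro v hv y hay hyc
  have hderiv : ∀ z ∈ Icc (-‖G‖) y, HasDerivAt (fun y' => ((inner ℝ v G : ℝ) - y') * Q0 y' v)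
      (Λ0 z * (((volume V).toReal)⁻¹ * (∫ w in V, Q0 z w) - Q0 z v)) z :=
    fun z _ => heq z v hv
  have havg : ∀ z ∈ Ioo (-‖G‖) y, 0 ≤ ((volume V).toReal)⁻¹ * ∫ w in V, Q0 z w :=
    fun z _ => mul_nonneg (inv_nonneg.2 ENNReal.toReal_nonneg) (integral_nonneg (hpos z))
  have hint := Duhamel.integrableOn_source hyc hΛcont.continuousOn
    (fun z _ => hlam1.trans_le (hΛbd z).1) havg hderiv
  exact ⟨Duhamel.lower_bound hay hyc hderiv (hbdry v)
      (Duhamel.integrableOn_rpow_sub_mul hyc hint _) (fun z _ => hΛbd z) havg fun z _ => hpos z v,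
    Duhamel.upper_bound hay hyc hderiv (hbdry v)
      (Duhamel.integrableOn_rpow_sub_mul hyc hint _) (fun z _ => hΛbd z) havg fun z _ => hpos z v⟩
end
end
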